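/- Let Q be a symmetric n×n real matrix, d ∈ ℝⁿ, A ∈ ℝ^{m×n}, b ∈ ℝᵐ, and let M, N be symmetric positive semidefinite n×n matrices with Q = M − N. Define Ψ(x, x̃) := ½xᵀMx + ½x̃ᵀMx̃ + dᵀx + dᵀx̃ − xᵀNx̃ and Φ(x) := xᵀQx + 2dᵀx. Let x̃ ∈ F and let x̄ minimize x ↦ Ψ(x, x̃) over F. If Φ(x̄) ≥ Φ(x̃), then x̃ is a KKT point of the QP. -/

import Mathlib

/-
Since `Ψ(x, x) = Φ(x)` and `Ψ(x̄, x̃) - (Φ(x̄) + Φ(x̃)) / 2 = (x̄ - x̃)ᵀN(x̄ - x̃) / 2 ≥ 0`, the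
hypothesis `Φ(x̄) ≥ Φ(x̃)` gives `Ψ(x̃, x̃) ≤ Ψ(x̄, x̃)`, so `x̃` itself minimizes the quadratic
`Ψ(·, x̃)` over `F`. Its gradient at `x̃` is `Mx̃ + d - Nx̃ = Qx̃ + d`, which is therefore
nonnegative on every direction keeping the active constraints, and Farkas' lemma applied to
the active rows of `A` yields the multipliers.
-/

open Matrix

/-- The bi-convex function `Ψ(x, x̃) = ½xᵀMx + ½x̃ᵀMx̃ + dᵀx + dᵀx̃ − xᵀNx̃`. -/
noncomputable def Psi {n : ℕ} (M N : Matrix (Fin n) (Fin n) ℝ) (d : Fin n → ℝ)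
    (x xt : Fin n → ℝ) : ℝ :=
  (1 / 2 : ℝ) * (x ⬝ᵥ (M *ᵥ x)) + (1 / 2 : ℝ) * (xt ⬝ᵥ (M *ᵥ xt)) +
    d ⬝ᵥ x + d ⬝ᵥ xt - x ⬝ᵥ (N *ᵥ xt)

/-- The objective `Φ(x) = xᵀQx + 2dᵀx`. -/
noncomputable def Phi {n : ℕ} (Q : Matrix (Fin n) (Fin n) ℝ) (d : Fin n → ℝ)
    (x : Fin n → ℝ) : ℝ :=
  x ⬝ᵥ (Q *ᵥ x) + 2 * (d ⬝ᵥ x)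

namespace Matrix

theorem IsSymm.dotProduct_mulVec_comm {κ R : Type*} [Fintype κ] [CommSemiring R]
    {P : Matrix κ κ R} (hP : P.IsSymm) (x y : κ → R) :
    x ⬝ᵥ (P *ᵥ y) = y ⬝ᵥ (P *ᵥ x) := by
  rw [dotProduct_mulVec, ← mulVec_transpose, hP.eq, dotProduct_comm]

section Farkas

variable {𝕜 ι κ : Type*} [Field 𝕜] [LinearOrder 𝕜] [IsStrictOrderedRing 𝕜] [Fintype κ]

/-- Fourier–Motzkin elimination of row `a`: a solution `w` of the projected system becomes a
solution `w - (A a ⬝ᵥ w) • v` of the original one with constraint `a` tight. -/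
theorem dotProduct_nonpos_of_pivot [DecidableEq ι] {s : Finset ι} {a : ι} {A : Matrix ι κ 𝕜}
    {c v : κ → 𝕜} (h : ∀ u, (∀ i ∈ insert a s, (A *ᵥ u) i ≤ 0) → c ⬝ᵥ u ≤ 0)
    (hva : (A *ᵥ v) a = 1) (w : κ → 𝕜)
    (hw : ∀ i ∈ s, ((A - vecMulVec (A *ᵥ v) (A a)) *ᵥ w) i ≤ 0) :
    (c - (c ⬝ᵥ v) • A a) ⬝ᵥ w ≤ 0 := by
  have := h (w - (A a ⬝ᵥ w) • v) <| by
    refine Finset.forall_mem_insert _ _ _ |>.mpr ⟨?_, fun i hi => ?_⟩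
    · simp only [mulVec_sub, mulVec_smul, Pi.sub_apply, Pi.smul_apply, hva, smul_eq_mul,
        mul_one]
      exact (sub_eq_zero.2 rfl).le
    · simpa [sub_mulVec, vecMulVec_mulVec, mulVec_sub, mulVec_smul, mul_comm] using hw i hi
  simpa [dotProduct_sub, sub_dotProduct, dotProduct_smul, smul_dotProduct, mul_comm,
    dotProduct_comm] using this

/-- Farkas' lemma, with the multipliers supported on the constraints in `s`. -/
theorem exists_nonneg_transpose_mulVec_eq_of_dotProduct_nonpos [Fintype ι] (s : Finset ι)
    (A : Matrix ι κ 𝕜) (c : κ → 𝕜) (h : ∀ v, (∀ i ∈ s, (A *ᵥ v) i ≤ 0) → c ⬝ᵥ v ≤ 0) :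
    ∃ lam : ι → 𝕜, 0 ≤ lam ∧ (∀ i ∉ s, lam i = 0) ∧ Aᵀ *ᵥ lam = c := by
  classical
  induction s using Finset.induction_on generalizing A c with
  | empty =>
    have hc : c = 0 := dotProduct_self_eq_zero.mp <| le_antisymm (h c (by simp))
      (by simpa using h (-c) (by simp))
    exact ⟨0, le_rfl, fun _ _ => rfl, by simp [hc]⟩
  | insert a s ha ih =>
    by_cases hs : ∀ v, (∀ i ∈ s, (A *ᵥ v) i ≤ 0) → c ⬝ᵥ v ≤ 0
    · obtain ⟨lam, hlam, hsupp, hc⟩ := ih A c hs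
      exact ⟨lam, hlam, fun i hi => hsupp i (mt (Finset.mem_insert_of_mem) hi), hc⟩
    push Not at hs
    obtain ⟨v₀, hv₀s, hcv₀⟩ := hs
    have hα : 0 < (A *ᵥ v₀) a := by
      by_contra! hle
      exact (h v₀ (Finset.forall_mem_insert _ _ _ |>.mpr ⟨hle, hv₀s⟩)).not_gt hcv₀
    set v := ((A *ᵥ v₀) a)⁻¹ • v₀
    have hva : (A *ᵥ v) a = 1 := by simp [v, mulVec_smul, hα.ne']
    have hvs : ∀ i ∈ s, (A *ᵥ v) i ≤ 0 := fun i hi => by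
      simpa [v, mulVec_smul] using mul_nonpos_of_nonneg_of_nonpos (inv_pos.2 hα).le (hv₀s i hi)
    have hcv : 0 < c ⬝ᵥ v := by simpa [v, dotProduct_smul] using mul_pos (inv_pos.2 hα) hcv₀
    obtain ⟨μ, hμ, hμs, hμc⟩ := ih (A - vecMulVec (A *ᵥ v) (A a)) (c - (c ⬝ᵥ v) • A a)
      (dotProduct_nonpos_of_pivot h hva)
    have hγ : 0 ≤ c ⬝ᵥ v - μ ⬝ᵥ (A *ᵥ v) := by
      have : μ ⬝ᵥ (A *ᵥ v) ≤ 0 := Finset.sum_nonpos fun i _ => by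
        by_cases hi : i ∈ s
        · exact mul_nonpos_of_nonneg_of_nonpos (hμ i) (hvs i hi)
        · simp [hμs i hi]
      linarith
    refine ⟨μ + Pi.single a (c ⬝ᵥ v - μ ⬝ᵥ (A *ᵥ v)), add_nonneg hμ (Pi.single_nonneg.2 hγ),
      fun i hi => ?_, ?_⟩
    · rw [Finset.mem_insert, not_or] at hi
      simp [hμs i hi.2, hi.1]
    · rw [mulVec_transpose] at hμc ⊢
      rw [vecMul_sub, vecMul_vecMulVec] at hμc
      rw [add_vecMul, single_vecMul, row]
      linear_combination (norm := module) hμc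

end Farkas

section Polyhedron

open Filter Topology

variable {ι κ : Type*} [Fintype ι] [Fintype κ]
  {A : Matrix ι κ ℝ} {b : ι → ℝ} {x : κ → ℝ}

theorem eventually_mulVec_add_smul_le (hx : A *ᵥ x ≤ b) {v : κ → ℝ}
    (hv : ∀ i, (A *ᵥ x) i = b i → (A *ᵥ v) i ≤ 0) :
    ∀ᶠ t in 𝓝[>] (0 : ℝ), A *ᵥ (x + t • v) ≤ b := by
  simp only [Pi.le_def, mulVec_add, mulVec_smul, Pi.add_apply, Pi.smul_apply, smul_eq_mul]
  refine eventually_all.2 fun i => ?_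
  rcases (hx i).eq_or_lt with hi | hi
  · filter_upwards [self_mem_nhdsWithin] with t (ht : 0 < t)
    linarith [mul_nonpos_of_nonneg_of_nonpos ht.le (hv i hi)]
  · have hlim : Tendsto (fun t : ℝ => (A *ᵥ x) i + t * (A *ᵥ v) i) (𝓝[>] 0)
        (𝓝 ((A *ᵥ x) i)) := by
      refine tendsto_nhdsWithin_of_tendsto_nhds ((Continuous.tendsto' ?_ _ _ (by simp)))
      fun_prop
    exact (hlim.eventually_lt_const hi).mono fun _ => le_of_lt

theorem dotProduct_nonneg_of_isMinOn {P : Matrix κ κ ℝ} (hP : P.IsSymm) {q : κ → ℝ}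
    (hx : A *ᵥ x ≤ b)
    (hmin : IsMinOn (fun y => y ⬝ᵥ (P *ᵥ y) / 2 + q ⬝ᵥ y) {y | A *ᵥ y ≤ b} x) {v : κ → ℝ}
    (hv : ∀ i, (A *ᵥ x) i = b i → (A *ᵥ v) i ≤ 0) :
    0 ≤ (P *ᵥ x + q) ⬝ᵥ v := by
  have hlim : Tendsto (fun t : ℝ => t * (v ⬝ᵥ (P *ᵥ v)) / 2 + (P *ᵥ x + q) ⬝ᵥ v) (𝓝[>] 0)
      (𝓝 ((P *ᵥ x + q) ⬝ᵥ v)) := by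
    refine tendsto_nhdsWithin_of_tendsto_nhds ((Continuous.tendsto' ?_ _ _ (by simp)))
    fun_prop
  refine ge_of_tendsto hlim ?_
  filter_upwards [eventually_mulVec_add_smul_le hx hv, self_mem_nhdsWithin]
    with t ht (htpos : 0 < t)
  have hexpand : (x + t • v) ⬝ᵥ (P *ᵥ (x + t • v)) / 2 + q ⬝ᵥ (x + t • v) =
      x ⬝ᵥ (P *ᵥ x) / 2 + q ⬝ᵥ x + t * (t * (v ⬝ᵥ (P *ᵥ v)) / 2 + (P *ᵥ x + q) ⬝ᵥ v) := by
    simp only [mulVec_add, mulVec_smul, dotProduct_add, add_dotProduct, dotProduct_smul,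
      smul_dotProduct, smul_eq_mul, hP.dotProduct_mulVec_comm x v, dotProduct_comm q v,
      dotProduct_comm (P *ᵥ x) v]
    ring
  have := hmin ht
  simp only [Set.mem_ofPred_eq, hexpand] at this
  exact nonneg_of_mul_nonneg_right (by linarith) htpos

theorem exists_kkt_of_dotProduct_nonneg {g : κ → ℝ}
    (hg : ∀ v, (∀ i, (A *ᵥ x) i = b i → (A *ᵥ v) i ≤ 0) → 0 ≤ g ⬝ᵥ v) :
    ∃ lam : ι → ℝ, 0 ≤ lam ∧ g = -(Aᵀ *ᵥ lam) ∧ (A *ᵥ x - b) ⬝ᵥ lam = 0 := by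
  obtain ⟨lam, hlam, hsupp, hAlam⟩ :=
    exists_nonneg_transpose_mulVec_eq_of_dotProduct_nonpos
      (Finset.univ.filter fun i => (A *ᵥ x) i = b i) A (-g) fun v hv => by
        simpa using hg v fun i hi => hv i (by simpa using hi)
  refine ⟨lam, hlam, by rw [hAlam, neg_neg], Finset.sum_eq_zero fun i _ => ?_⟩
  by_cases hi : (A *ᵥ x) i = b i
  · simp [hi]
  · simp [hsupp i (by simpa using hi)]

theorem exists_kkt_of_isMinOn {P : Matrix κ κ ℝ} (hP : P.IsSymm) {q : κ → ℝ}
    (hx : A *ᵥ x ≤ b)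
    (hmin : IsMinOn (fun y => y ⬝ᵥ (P *ᵥ y) / 2 + q ⬝ᵥ y) {y | A *ᵥ y ≤ b} x) :
    ∃ lam : ι → ℝ, 0 ≤ lam ∧ P *ᵥ x + q = -(Aᵀ *ᵥ lam) ∧ (A *ᵥ x - b) ⬝ᵥ lam = 0 :=
  exists_kkt_of_dotProduct_nonneg fun _ hv => dotProduct_nonneg_of_isMinOn hP hx hmin hv

end Polyhedron

end Matrix

theorem Psi_self {n : ℕ} (M N : Matrix (Fin n) (Fin n) ℝ) (d x : Fin n → ℝ) :
    Psi M N d x x = Phi (M - N) d x := by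
  simp only [Psi, Phi, sub_mulVec, dotProduct_sub]
  ring

theorem half_Phi_add_half_Phi_le_Psi {n : ℕ} (M : Matrix (Fin n) (Fin n) ℝ)
    {N : Matrix (Fin n) (Fin n) ℝ} (hN : N.PosSemidef) (d x y : Fin n → ℝ) :
    Phi (M - N) d x / 2 + Phi (M - N) d y / 2 ≤ Psi M N d x y := by
  have hgap : Psi M N d x y - (Phi (M - N) d x / 2 + Phi (M - N) d y / 2) =
      (x - y) ⬝ᵥ (N *ᵥ (x - y)) / 2 := by
    simp only [Psi, Phi, sub_mulVec, mulVec_sub, dotProduct_sub, sub_dotProduct,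
      (isHermitian_iff_isSymm.1 hN.isHermitian).dotProduct_mulVec_comm y x]
    ring
  have := hN.dotProduct_mulVec_nonneg (x - y)
  simp only [star_trivial] at this
  linarith

theorem kkt_of_no_descent {n m : ℕ} (Q M N : Matrix (Fin n) (Fin n) ℝ)
    (hM : M.PosSemidef) (hN : N.PosSemidef) (hQMN : Q = M - N)
    (d : Fin n → ℝ) (A : Matrix (Fin m) (Fin n) ℝ) (b : Fin m → ℝ)
    (xt : Fin n → ℝ) (hxt : A *ᵥ xt ≤ b)
    (xbar : Fin n → ℝ)
    (hmin : ∀ x : Fin n → ℝ, A *ᵥ x ≤ b → Psi M N d xbar xt ≤ Psi M N d x xt)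
    (hPhi : Phi Q d xt ≤ Phi Q d xbar) :
    ∃ lam : Fin m → ℝ, 0 ≤ lam ∧ Q *ᵥ xt + d = -(Aᵀ *ᵥ lam) ∧
      (A *ᵥ xt - b) ⬝ᵥ lam = 0 := by
  subst hQMN
  have hxt_min : IsMinOn (fun y => y ⬝ᵥ (M *ᵥ y) / 2 + (d - N *ᵥ xt) ⬝ᵥ y)
      {y | A *ᵥ y ≤ b} xt := isMinOn_iff.2 fun y hy => by
    have : Psi M N d xt xt ≤ Psi M N d y xt := calc
      Psi M N d xt xt = Phi (M - N) d xt := Psi_self M N d xt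
      _ ≤ Phi (M - N) d xbar / 2 + Phi (M - N) d xt / 2 := by linarith
      _ ≤ Psi M N d xbar xt := half_Phi_add_half_Phi_le_Psi M hN d xbar xt
      _ ≤ Psi M N d y xt := hmin y hy
    simp only [Psi, sub_dotProduct, dotProduct_comm (N *ᵥ xt)] at this ⊢
    linarith
  obtain ⟨lam, hlam, hgrad, hslack⟩ :=
    exists_kkt_of_isMinOn (isHermitian_iff_isSymm.1 hM.isHermitian) hxt hxt_min
  exact ⟨lam, hlam, by rw [← hgrad, sub_mulVec]; abel, hslack⟩
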